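/- arXiv:2507.13358 — 8 statements merged into one kernel-verified Lean document; each statement's English description precedes it below -/
import Mathlib

section
/- Let R be an integral domain and let M_n : ℤ_p → R be a sequence of functions such that each M_n is locally constant mod p^n, has no zeroes, and satisfies M_n(θ_p^{∘m}(z)) = M_{m+n}(z)/M_m(z) for all z ∈ ℤ_p and all m,n ≥ 0 (with both sides in R). Then there exist nonzero r_0,...,r_{p-1} ∈ R such that M_n(z) = ∏_{k=0}^{n-1} r_{[θ_p^{∘k}(z)]_p} for all n and z; conversely any sequence of that product form satisfies the two listed properties. -/
/-- `m`-fold shift of a digit stream: models `θ_p^{∘m}(z)`. -/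
def shiftIter {p : ℕ} (m : ℕ) (z : ℕ → Fin p) : ℕ → Fin p := fun i => z (i + m)

open Finset

section
variable {p : ℕ} {R : Type*}

theorem prod_range_shiftIter_mul [CommMonoid R] (r : Fin p → R) (m n : ℕ) (z : ℕ → Fin p) :
    (∏ i ∈ range n, r (shiftIter m z i)) * ∏ i ∈ range m, r (z i) =
      ∏ i ∈ range (m + n), r (z i) := by
  rw [prod_range_add, mul_comm]
  exact congrArg _ (prod_congr rfl fun i _ => by rw [shiftIter, add_comm])

theorem eq_prod_range_of_mul_shiftIter_one [CommMonoid R] {M : ℕ → (ℕ → Fin p) → R}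
    (hM₀ : ∀ z, M 0 z = 1) (hM₁ : ∀ z, M 1 z = M 1 fun _ => z 0)
    (hM : ∀ n z, M n (shiftIter 1 z) * M 1 z = M (1 + n) z) (n : ℕ) (z : ℕ → Fin p) :
    M n z = ∏ i ∈ range n, M 1 fun _ => z i := by
  induction n generalizing z with
  | zero => simpa using hM₀ z
  | succ n ih => rw [add_comm, ← hM, ih, hM₁, add_comm, prod_range_succ']; rfl

end

theorem stmt3_general {p : ℕ} {R : Type*} [CommRing R] [IsDomain R]
    (M : ℕ → (ℕ → Fin p) → R) :
    ((∀ n : ℕ, ∀ z w : ℕ → Fin p, (∀ i < n, z i = w i) → M n z = M n w) ∧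
     (∀ n : ℕ, ∀ z : ℕ → Fin p, M n z ≠ 0) ∧
     (∀ m n : ℕ, ∀ z : ℕ → Fin p, M n (shiftIter m z) * M m z = M (m + n) z))
    ↔ (∃ r : Fin p → R, (∀ i, r i ≠ 0) ∧
        ∀ n : ℕ, ∀ z : ℕ → Fin p, M n z = ∏ i ∈ Finset.range n, r (z i)) := by
  constructor
  · rintro ⟨hloc, hne, hmul⟩
    have hM₀ (z : ℕ → Fin p) : M 0 z = 1 := (mul_eq_right₀ (hne 0 z)).1 (hmul 0 0 z)
    have hM₁ (z : ℕ → Fin p) : M 1 z = M 1 fun _ => z 0 :=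
      hloc 1 _ _ fun i hi => by rw [Nat.lt_one_iff.1 hi]
    exact ⟨fun j => M 1 fun _ => j, fun j => hne 1 _,
      eq_prod_range_of_mul_shiftIter_one hM₀ hM₁ (hmul 1)⟩
  · rintro ⟨r, hr, hM⟩
    obtain rfl : M = fun n z => ∏ i ∈ range n, r (z i) := funext₂ hM
    exact ⟨fun n z w h => prod_congr rfl fun i hi => congrArg r (h i (mem_range.1 hi)),
      fun n z => prod_ne_zero_iff.2 fun i _ => hr _, fun m n z => prod_range_shiftIter_mul r m n z⟩

/-- Characterization of M-functions:  a sequence `M_n : ℤ_p → R` (on digit streams) is of the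
form `M_n(z) = ∏_{i=0}^{n-1} r_{[θ_p^{∘i}(z)]_p}` for some nonzero `r_0,...,r_{p-1} ∈ R`
if and only if each `M_n` is locally constant mod `p^n`, has no zeroes, and satisfies
`M_n(θ_p^{∘m}(z)) = M_{m+n}(z)/M_m(z)` for all `z, m, n` (stated multiplicatively in `R`). -/
theorem stmt3 {p : ℕ} (hp : 2 ≤ p) {R : Type*} [CommRing R] [IsDomain R]
    (M : ℕ → (ℕ → Fin p) → R) :
    ((∀ n : ℕ, ∀ z w : ℕ → Fin p, (∀ i < n, z i = w i) → M n z = M n w) ∧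
     (∀ n : ℕ, ∀ z : ℕ → Fin p, M n z ≠ 0) ∧
     (∀ m n : ℕ, ∀ z : ℕ → Fin p, M n (shiftIter m z) * M m z = M (m + n) z))
    ↔ (∃ r : Fin p → R, (∀ i, r i ≠ 0) ∧
        ∀ n : ℕ, ∀ z : ℕ → Fin p, M n z = ∏ i ∈ Finset.range n, r (z i)) :=
  stmt3_general M
end

section
/- Let κ be the κ-factor of an M-function with multipliers r_0,...,r_{p-1} in an integral domain, i.e. κ(m) = ∏_{j=1}^{p-1} (r_j/r_0)^{#_{p:j}(m)}. Then for all z ∈ ℤ_p and all m, n ≥ 0, κ([θ_p^{∘m}(z)]_{p^n}) = κ([z]_{p^{m+n}}) / κ([z]_{p^m}). -/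
/-- The number of occurrences of the digit `k` among the first `n` base-`p` digits of `z`,
i.e. `#_{p:k}([z]_{p^n})`. -/
def digitCount {p : ℕ} (z : ℕ → Fin p) (n : ℕ) (k : Fin p) : ℕ :=
  ((Finset.range n).filter fun i => z i = k).card

/-- The κ-factor of an M-function with multipliers `r_0,...,r_{p-1}`, evaluated at
`[z]_{p^n}`:  `κ([z]_{p^n}) = ∏_{j=1}^{p-1} (r_j/r_0)^{#_{p:j}([z]_{p^n})}` in `Frac R`. -/
noncomputable def kappa {p : ℕ} [NeZero p] {R : Type*} [CommRing R] [IsDomain R] (r : Fin p → R)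
    (z : ℕ → Fin p) (n : ℕ) : FractionRing R :=
  ∏ j ∈ Finset.univ.filter (fun j : Fin p => j ≠ 0),
    (algebraMap R (FractionRing R) (r j) / algebraMap R (FractionRing R) (r 0))
      ^ digitCount z n j

lemma digitCount_add {p : ℕ} (z : ℕ → Fin p) (m n : ℕ) (k : Fin p) :
    digitCount z (m + n) k = digitCount z m k + digitCount (shiftIter m z) n k := by
  simp only [digitCount, shiftIter, Finset.card_filter, Finset.sum_range_add, add_comm _ m]

section Kappa

variable {p : ℕ} [NeZero p] {R : Type*} [CommRing R] [IsDomain R]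

lemma kappa_add (r : Fin p → R) (z : ℕ → Fin p) (m n : ℕ) :
    kappa r z (m + n) = kappa r z m * kappa r (shiftIter m z) n := by
  simp only [kappa, ← Finset.prod_mul_distrib, ← pow_add, digitCount_add]

lemma kappa_ne_zero {r : Fin p → R} (hr : ∀ i, r i ≠ 0) (z : ℕ → Fin p) (n : ℕ) :
    kappa r z n ≠ 0 := by
  have hmap : ∀ i, algebraMap R (FractionRing R) (r i) ≠ 0 := fun i =>
    (map_ne_zero_iff _ (IsFractionRing.injective R (FractionRing R))).mpr (hr i)
  exact Finset.prod_ne_zero_iff.mpr fun j _ => pow_ne_zero _ (div_ne_zero (hmap j) (hmap 0))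

end Kappa

theorem stmt4_general {p : ℕ} [NeZero p] {R : Type*} [CommRing R] [IsDomain R]
    (r : Fin p → R) (hr : ∀ i, r i ≠ 0) (z : ℕ → Fin p) (m n : ℕ) :
    kappa r (shiftIter m z) n = kappa r z (m + n) / kappa r z m := by
  rw [eq_div_iff (kappa_ne_zero hr z m), kappa_add, mul_comm]

/-- For the κ-factor of an M-function with nonzero multipliers in an integral domain:
`κ([θ_p^{∘m}(z)]_{p^n}) = κ([z]_{p^{m+n}}) / κ([z]_{p^m})` for all `z ∈ ℤ_p`, `m, n ≥ 0`. -/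
theorem stmt4 {p : ℕ} [NeZero p] (hp : 2 ≤ p) {R : Type*} [CommRing R] [IsDomain R]
    (r : Fin p → R) (hr : ∀ i, r i ≠ 0) (z : ℕ → Fin p) (m n : ℕ) :
    kappa r (shiftIter m z) n = kappa r z (m + n) / kappa r z m :=
  stmt4_general r hr z m n
end

section
/- Let g : ℤ_p → R be locally constant mod p^{N}, with Fourier transform ĝ(t) = p^{−N} ∑_{n=0}^{p^N−1} g(n) e^{−2πint}. Let q_0,...,q_{p−1} ∈ R and define f(z) = q_{[z]_p} · g(θ_p(z)). Then f is locally constant mod p^{N+1} and its Fourier transform is f̂(t) = ( (1/p) ∑_{j=0}^{p−1} q_j e^{−2πijt} ) · ĝ(pt) for all t ∈ Ẑ_p. -/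
/-- `[z]_{p^n}`: the residue of `z` (given by its digit stream) mod `p^n`. -/
def trunc {p : ℕ} (z : ℕ → Fin p) (n : ℕ) : ℕ :=
  ∑ i ∈ Finset.range n, (z i : ℕ) * p ^ i

/-- The shift map `θ_p` on digit streams. -/
def shift {p : ℕ} (z : ℕ → Fin p) : ℕ → Fin p := fun i => z (i + 1)

/-- The digit stream of a natural number `m`. -/
def natStream (p : ℕ) [NeZero p] (m : ℕ) : ℕ → Fin p :=
  fun i => ⟨m / p ^ i % p, Nat.mod_lt _ (Nat.pos_of_ne_zero (NeZero.ne p))⟩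

/-- The Fourier transform of a function `F` that is locally constant mod `p^M`, evaluated at
`t = a/p^d ∈ Ẑ_p`:  `F̂(t) = p^{−M} ∑_{m=0}^{p^M−1} F(m) e^{−2πimt}`, where
`e^{−2πimt} = ζ_d^{m·(p^d − a mod p^d)}` for a compatible system `ζ` of p-power roots of
unity. -/
def fourierTF {p : ℕ} [NeZero p] {R : Type*} [CommRing R] [Invertible (p : R)]
    (ζ : ℕ → R) (M : ℕ) (F : (ℕ → Fin p) → R) (a d : ℕ) : R :=
  (⅟(p : R)) ^ M *
    ∑ m ∈ Finset.range (p ^ M), F (natStream p m) * (ζ d) ^ (m * (p ^ d - a % p ^ d))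

/-!
Writing `m < p^{N+1}` as `m = p·i + j` with `j < p`, the digit stream of `m` has first digit `j`
and its shift is the digit stream of `i`, while `e^{−2πimt} = e^{−2πijt} · e^{−2πi·i·(pt)}`. The sum
defining `f̂(t)` therefore factors as a sum over `j` times a sum over `i`.
-/

theorem Finset.sum_range_mul {M : Type*} [AddCommMonoid M] (f : ℕ → M) (a b : ℕ) :
    ∑ m ∈ range (a * b), f m = ∑ i ∈ range a, ∑ j ∈ range b, f (b * i + j) := by
  induction a with
  | zero => simp
  | succ n ih => rw [Nat.succ_mul, sum_range_add, ih, sum_range_succ, mul_comm b n]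

section Digits

variable {p : ℕ} [NeZero p]

theorem natStream_mul_add_zero (i : ℕ) (j : Fin p) : natStream p (p * i + j) 0 = j := by
  ext
  simp [natStream, Nat.mod_eq_of_lt j.isLt]

theorem shift_natStream_mul_add (i : ℕ) (j : Fin p) :
    shift (natStream p (p * i + j)) = natStream p i := by
  funext k
  ext
  simp only [shift, natStream, pow_succ', ← Nat.div_div_eq_div_mul,
    Nat.mul_add_div (Nat.pos_of_ne_zero (NeZero.ne p)), Nat.div_eq_of_lt j.isLt, add_zero]

end Digits

/-- `n - a % n` represents `-a` modulo `n`. -/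
theorem Nat.mul_sub_mod_modEq {n : ℕ} (hn : 0 < n) (m a : ℕ) :
    m * (n - a % n) ≡ n - m * a % n [MOD n] := by
  rw [← ZMod.natCast_eq_natCast_iff]
  push_cast [Nat.cast_sub (Nat.mod_lt _ hn).le, ZMod.natCast_mod, ZMod.natCast_self]
  ring

theorem pow_mul_add_mul_sub_mod {M : Type*} [Monoid M] {x : M} {n : ℕ} (hx : x ^ n = 1)
    (hn : 0 < n) (m a i j : ℕ) :
    x ^ ((m * i + j) * (n - a % n)) = x ^ (j * (n - a % n)) * x ^ (i * (n - m * a % n)) := by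
  have hexp : i * (m * (n - a % n)) % n = i * (n - m * a % n) % n :=
    (Nat.mul_sub_mod_modEq hn m a).mul_left i
  have hpow : x ^ (i * (n - m * a % n)) = x ^ (i * (m * (n - a % n))) := by
    rw [pow_eq_pow_mod _ hx, ← hexp, ← pow_eq_pow_mod _ hx]
  rw [hpow, ← pow_add]
  congr 1
  ring

theorem stmt7_general {p : ℕ} [NeZero p] {R : Type*} [CommRing R] [Invertible (p : R)]
    (ζ : ℕ → R) (hprim : ∀ d, IsPrimitiveRoot (ζ d) (p ^ d))
    (N : ℕ) (g : (ℕ → Fin p) → R)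
    (hg : ∀ z w : ℕ → Fin p, (∀ i < N, z i = w i) → g z = g w)
    (q : Fin p → R) :
    (∀ z w : ℕ → Fin p, (∀ i < N + 1, z i = w i) →
        q (z 0) * g (shift z) = q (w 0) * g (shift w)) ∧
    (∀ a d : ℕ,
        fourierTF ζ (N + 1) (fun z => q (z 0) * g (shift z)) a d
          = (⅟(p : R) * ∑ j : Fin p, q j * (ζ d) ^ ((j : ℕ) * (p ^ d - a % p ^ d)))
              * fourierTF ζ N g (p * a) d) := by
  refine ⟨fun z w h => ?_, fun a d => ?_⟩
  · rw [h 0 N.succ_pos, hg (shift z) (shift w) fun i hi => h (i + 1) (by omega)]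
  · have hpd : 0 < p ^ d := pow_pos (Nat.pos_of_ne_zero (NeZero.ne p)) d
    have hblock : ∀ i : ℕ,
        ∑ j ∈ Finset.range p, q (natStream p (p * i + j) 0) *
            g (shift (natStream p (p * i + j))) * ζ d ^ ((p * i + j) * (p ^ d - a % p ^ d))
          = (∑ j : Fin p, q j * ζ d ^ ((j : ℕ) * (p ^ d - a % p ^ d))) *
            (g (natStream p i) * ζ d ^ (i * (p ^ d - p * a % p ^ d))) := by
      intro i
      rw [Finset.sum_range, Finset.sum_mul]
      refine Finset.sum_congr rfl fun j _ => ?_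
      rw [natStream_mul_add_zero, shift_natStream_mul_add,
        pow_mul_add_mul_sub_mod (hprim d).pow_eq_one hpd]
      ring
    simp only [fourierTF]
    rw [pow_succ, pow_succ, Finset.sum_range_mul,
      Finset.sum_congr rfl fun i _ => hblock i, ← Finset.mul_sum]
    ring

/-- Let `g : ℤ_p → R` be locally constant mod `p^N` with Fourier transform `ĝ`, let
`q_0,...,q_{p−1} ∈ R`, and set `f(z) = q_{[z]_p}·g(θ_p(z))`.  Then `f` is locally constant
mod `p^{N+1}` and `f̂(t) = ((1/p)∑_{j<p} q_j e^{−2πijt})·ĝ(pt)` for all `t ∈ Ẑ_p`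
(represented as `t = a/p^d`, so that `pt = pa/p^d`). -/
theorem stmt7 {p : ℕ} [NeZero p] (hp : 2 ≤ p) {R : Type*} [CommRing R] [Invertible (p : R)]
    (ζ : ℕ → R) (hprim : ∀ d, IsPrimitiveRoot (ζ d) (p ^ d))
    (hcomp : ∀ d, ζ (d + 1) ^ p = ζ d)
    (N : ℕ) (g : (ℕ → Fin p) → R)
    (hg : ∀ z w : ℕ → Fin p, (∀ i < N, z i = w i) → g z = g w)
    (q : Fin p → R) :
    (∀ z w : ℕ → Fin p, (∀ i < N + 1, z i = w i) →
        q (z 0) * g (shift z) = q (w 0) * g (shift w)) ∧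
    (∀ a d : ℕ,
        fourierTF ζ (N + 1) (fun z => q (z 0) * g (shift z)) a d
          = (⅟(p : R) * ∑ j : Fin p, q j * (ζ d) ^ ((j : ℕ) * (p ^ d - a % p ^ d)))
              * fourierTF ζ N g (p * a) d) :=
  stmt7_general ζ hprim N g hg q
end

section
/- Let z ∈ ℤ_p have well-defined digit densities d_{p:k}(z) for all k, and let γ : ℕ → ℕ satisfy γ(n) ≤ n, γ(n) → ∞, and γ(n)/n → L ∈ ℝ. Then for each k, lim_{n→∞} (1/n)·#_{p:k}([θ_p^{∘γ(n)}(z)]_{p^{n−γ(n)}}) = (1 − L)·d_{p:k}(z). -/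
open Filter Topology

/-! The digits of `z` below `n` split into those below `γ n` and the first `n - γ n` digits of
the shifted stream, so the shifted count divided by `n` is `#(z, n)/n - #(z, γ n)/n`. The first
term tends to `d k`, and the second is `(#(z, γ n)/γ n) · (γ n/n) → d k · L` because `γ n → ∞`. -/

theorem digitCount_add_shiftIter {p : ℕ} (z : ℕ → Fin p) (k : Fin p) (m n : ℕ) :
    digitCount z m k + digitCount (shiftIter m z) n k = digitCount z (m + n) k := by
  simp only [digitCount, shiftIter, Finset.range_add_eq_union, Finset.filter_union,
    Finset.filter_map]
  rw [Finset.card_union_of_disjoint, Finset.card_map]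
  · simp only [Function.comp_def, addLeftEmbedding_apply, add_comm m]
    congr
  · exact (Finset.disjoint_range_addLeftEmbedding m _).mono (Finset.filter_subset _ _)
      (Finset.map_subset_map.mpr (Finset.filter_subset _ _))

theorem tendsto_comp_div_natCast {f : ℕ → ℝ} {d L : ℝ} {γ : ℕ → ℕ}
    (hf : Tendsto (fun n => f n / n) atTop (𝓝 d)) (hγtop : Tendsto γ atTop atTop)
    (hL : Tendsto (fun n => (γ n : ℝ) / n) atTop (𝓝 L)) :
    Tendsto (fun n => f (γ n) / n) atTop (𝓝 (d * L)) := by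
  refine ((hf.comp hγtop).mul hL).congr' ?_
  filter_upwards [hγtop.eventually_gt_atTop 0] with n hn
  have : (γ n : ℝ) ≠ 0 := by positivity
  simp only [Function.comp_apply]
  field_simp

theorem stmt13_general {p : ℕ} (z : ℕ → Fin p) (d : Fin p → ℝ)
    (hz : ∀ k, Tendsto (fun n => (digitCount z n k : ℝ) / n) atTop (𝓝 (d k)))
    (γ : ℕ → ℕ) (hγle : ∀ n, γ n ≤ n) (hγtop : Tendsto γ atTop atTop)
    (L : ℝ) (hL : Tendsto (fun n => (γ n : ℝ) / n) atTop (𝓝 L)) :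
    ∀ k, Tendsto (fun n => (digitCount (shiftIter (γ n) z) (n - γ n) k : ℝ) / n)
      atTop (𝓝 ((1 - L) * d k)) := by
  intro k
  have hsplit (n : ℕ) : (digitCount (shiftIter (γ n) z) (n - γ n) k : ℝ)
      = digitCount z n k - digitCount z (γ n) k := by
    rw [eq_sub_iff_add_eq', ← Nat.cast_add, digitCount_add_shiftIter, Nat.add_sub_cancel' (hγle n)]
  rw [show (1 - L) * d k = d k - d k * L by ring]
  refine ((hz k).sub (tendsto_comp_div_natCast (hz k) hγtop hL)).congr fun n => ?_
  rw [hsplit, sub_div]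

/-- If `z ∈ ℤ_p` has well-defined digit densities `d_{p:k}(z)` and `γ : ℕ → ℕ` satisfies
`γ(n) ≤ n`, `γ(n) → ∞`, `γ(n)/n → L`, then for each digit `k`,
`(1/n)·#_{p:k}([θ_p^{∘γ(n)}(z)]_{p^{n−γ(n)}}) → (1−L)·d_{p:k}(z)`. -/
theorem stmt13 {p : ℕ} (hp : 2 ≤ p) (z : ℕ → Fin p) (d : Fin p → ℝ)
    (hz : ∀ k, Tendsto (fun n => (digitCount z n k : ℝ) / n) atTop (𝓝 (d k)))
    (γ : ℕ → ℕ) (hγle : ∀ n, γ n ≤ n) (hγtop : Tendsto γ atTop atTop)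
    (L : ℝ) (hL : Tendsto (fun n => (γ n : ℝ) / n) atTop (𝓝 L)) :
    ∀ k, Tendsto (fun n => (digitCount (shiftIter (γ n) z) (n - γ n) k : ℝ) / n)
      atTop (𝓝 ((1 - L) * d k)) :=
  stmt13_general z d hz γ hγle hγtop L hL
end

section
/- Let E_n(z) = e_0^n ∏_{k=1}^{p−1} (e_k/e_0)^{#_{p:k}([z]_{p^n})} be a real-valued p-adic M-function with positive multipliers e_0,...,e_{p−1}. If ln e_0 + ∑_{k : e_k > e_0} d̄_{p:k}(z)·|ln(e_k/e_0)| < ∑_{k : e_k ≤ e_0} d̲_{p:k}(z)·|ln(e_k/e_0)|, then the series ∑_{n=0}^∞ E_n(z) converges in ℝ. -/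
/-!
Writing `ℓ_k = log (e_k / e_0)` and `c_k(n) = #_{p:k}([z]_{p^n}) / n`, one has
`E_n(z) = exp (n · (log e_0 + ∑_k ℓ_k c_k(n)))`. A term with `ℓ_k > 0` is eventually below
`ℓ_k · d̄_{p:k}(z) + ε` and a term with `ℓ_k ≤ 0` eventually below `ℓ_k · d̲_{p:k}(z) + ε`,
so the hypothesis makes the bracket eventually smaller than some `b < 0`;
then `E_n(z) ≤ (exp b)^n`.
-/

open Filter Topology

/-- `#_{p:k}([z]_{p^n})` for a natural-number digit value `k`: the number of digits equal to
`k` among the first `n` base-`p` digits of `z`. -/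
def digitCountN {p : ℕ} (z : ℕ → Fin p) (n k : ℕ) : ℕ :=
  ((Finset.range n).filter fun i => (z i : ℕ) = k).card

open Finset Real

section EventualBounds

variable {α ι : Type*} {l : Filter α}

theorem eventually_sum_lt {s : Finset ι} {f : ι → α → ℝ} {t : ι → ℝ}
    (h : ∀ i ∈ s, ∀ u, t i < u → ∀ᶠ x in l, f i x < u) {b : ℝ} (hb : ∑ i ∈ s, t i < b) :
    ∀ᶠ x in l, ∑ i ∈ s, f i x < b := by
  classical
  induction s using Finset.induction_on generalizing b with
  | empty => exact Eventually.of_forall fun _ => by simpa using hb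
  | insert a s ha ih =>
    rw [sum_insert ha] at hb
    set δ := b - (t a + ∑ i ∈ s, t i)
    have hfa := h a (mem_insert_self a s) (t a + δ / 2) (by linarith)
    have hfs := ih (fun i hi => h i (mem_insert_of_mem hi))
      (b := ∑ i ∈ s, t i + δ / 2) (by linarith)
    filter_upwards [hfa, hfs] with x hax hsx
    rw [sum_insert ha]
    linarith

theorem eventually_mul_lt_of_mul_limsup_lt {x : α → ℝ} {w t : ℝ} (hw : 0 ≤ w)
    (hx : IsBoundedUnder (· ≤ ·) l x) (ht : w * limsup x l < t) :
    ∀ᶠ a in l, w * x a < t := by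
  rcases hw.eq_or_lt with rfl | hw
  · simp only [zero_mul] at ht ⊢
    exact Eventually.of_forall fun _ => ht
  · filter_upwards [eventually_lt_of_limsup_lt ((lt_div_iff₀' hw).2 ht) hx] with a ha
    exact (lt_div_iff₀' hw).1 ha

theorem eventually_mul_lt_of_mul_liminf_lt {x : α → ℝ} {w t : ℝ} (hw : w ≤ 0)
    (hx : IsBoundedUnder (· ≥ ·) l x) (ht : w * liminf x l < t) :
    ∀ᶠ a in l, w * x a < t := by
  rcases hw.eq_or_lt with rfl | hw
  · simp only [zero_mul] at ht ⊢
    exact Eventually.of_forall fun _ => ht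
  · filter_upwards [eventually_lt_of_lt_liminf ((div_lt_iff_of_neg' hw).2 ht) hx] with a ha
    exact (div_lt_iff_of_neg' hw).1 ha

end EventualBounds

theorem pow_mul_prod_pow_eq_exp {ι : Type*} {s : Finset ι} {c : ℝ} {r : ι → ℝ}
    (d : ι → ℕ) (hc : 0 < c) (hr : ∀ i ∈ s, 0 < r i) {n : ℕ} (hn : n ≠ 0) :
    c ^ n * ∏ i ∈ s, r i ^ d i = exp (n * (log c + ∑ i ∈ s, log (r i) * (d i / n))) := by
  have hn' : (n : ℝ) ≠ 0 := Nat.cast_ne_zero.2 hn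
  have hsum : n * ∑ i ∈ s, log (r i) * (d i / n) = ∑ i ∈ s, d i * log (r i) := by
    rw [mul_sum]
    exact sum_congr rfl fun i _ => by field_simp
  rw [mul_add, hsum, exp_add, exp_sum, exp_nat_mul, exp_log hc]
  congr 1
  exact prod_congr rfl fun i hi => by rw [exp_nat_mul, exp_log (hr i hi)]

section Digits

variable {p : ℕ} (z : ℕ → Fin p)

theorem digitCountN_le (n k : ℕ) : digitCountN z n k ≤ n :=
  (card_filter_le _ _).trans (card_range n).le

theorem isBoundedUnder_le_digitCountN_div (k : ℕ) :
    IsBoundedUnder (· ≤ ·) atTop fun n => (digitCountN z n k : ℝ) / n :=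
  isBoundedUnder_of ⟨1, fun n => div_le_one_of_le₀ (by exact_mod_cast digitCountN_le z n k)
    n.cast_nonneg⟩

theorem isBoundedUnder_ge_digitCountN_div (k : ℕ) :
    IsBoundedUnder (· ≥ ·) atTop fun n => (digitCountN z n k : ℝ) / n :=
  isBoundedUnder_of ⟨0, fun _ => by positivity⟩

variable {e : ℕ → ℝ}

theorem eventually_log_div_mul_digitCountN_div_lt (he0 : 0 < e 0) {k : ℕ} (hk : 0 < e k)
    {u : ℝ}
    (hu : (if e 0 < e k
        then log (e k / e 0) * limsup (fun n => (digitCountN z n k : ℝ) / n) atTop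
        else log (e k / e 0) * liminf (fun n => (digitCountN z n k : ℝ) / n) atTop) < u) :
    ∀ᶠ n in atTop, log (e k / e 0) * ((digitCountN z n k : ℝ) / n) < u := by
  split_ifs at hu with hlt
  · exact eventually_mul_lt_of_mul_limsup_lt (log_nonneg ((one_le_div he0).2 hlt.le))
      (isBoundedUnder_le_digitCountN_div z k) hu
  · exact eventually_mul_lt_of_mul_liminf_lt
      (log_nonpos (div_pos hk he0).le ((div_le_one he0).2 (not_lt.1 hlt)))
      (isBoundedUnder_ge_digitCountN_div z k) hu

end Digits

theorem sum_ite_log_div_mul_eq {p : ℕ} {e : ℕ → ℝ} (he0 : 0 < e 0)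
    (he : ∀ k ∈ Ico 1 p, 0 < e k) (U V : ℕ → ℝ) :
    ∑ k ∈ Ico 1 p, (if e 0 < e k then log (e k / e 0) * U k else log (e k / e 0) * V k)
      = ∑ k ∈ (Ico 1 p).filter (fun k => e 0 < e k), U k * |log (e k / e 0)|
        - ∑ k ∈ (Ico 1 p).filter (fun k => e k ≤ e 0), V k * |log (e k / e 0)| := by
  rw [sum_ite, sub_eq_add_neg, ← sum_neg_distrib]
  simp only [not_lt]
  congr 1
  · refine sum_congr rfl fun k hk => ?_
    obtain ⟨-, hlt⟩ := mem_filter.1 hk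
    rw [abs_of_nonneg (log_nonneg ((one_le_div he0).2 hlt.le)), mul_comm]
  · refine sum_congr rfl fun k hk => ?_
    obtain ⟨hk, hle⟩ := mem_filter.1 hk
    rw [abs_of_nonpos (log_nonpos (div_pos (he k hk) he0).le ((div_le_one he0).2 hle))]
    ring

/-- Let `E_n(z) = e_0^n ∏_{k=1}^{p−1}(e_k/e_0)^{#_{p:k}([z]_{p^n})}` be a real-valued p-adic
M-function with positive multipliers.  If
`ln e_0 + ∑_{k : e_k > e_0} d̄_{p:k}(z)·|ln(e_k/e_0)| < ∑_{k : e_k ≤ e_0} d̲_{p:k}(z)·|ln(e_k/e_0)|`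
(`d̄`, `d̲` denoting upper and lower digit densities), then `∑_n E_n(z)` converges in `ℝ`. -/
theorem stmt14 {p : ℕ} (hp : 2 ≤ p) (z : ℕ → Fin p) (e : ℕ → ℝ)
    (he : ∀ k < p, 0 < e k)
    (hcond :
      Real.log (e 0)
          + ∑ k ∈ (Finset.Ico 1 p).filter (fun k => e 0 < e k),
              (Filter.limsup (fun n => (digitCountN z n k : ℝ) / n) atTop)
                * |Real.log (e k / e 0)|
        < ∑ k ∈ (Finset.Ico 1 p).filter (fun k => e k ≤ e 0),
              (Filter.liminf (fun n => (digitCountN z n k : ℝ) / n) atTop)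
                * |Real.log (e k / e 0)|) :
    Summable (fun n =>
      e 0 ^ n * ∏ k ∈ Finset.Ico 1 p, (e k / e 0) ^ digitCountN z n k) := by
  have he0 : 0 < e 0 := he 0 (by omega)
  have hek : ∀ k ∈ Ico 1 p, 0 < e k := fun k hk => he k (mem_Ico.1 hk).2
  have hneg := sub_neg.2 hcond
  rw [add_sub_assoc, ← sum_ite_log_div_mul_eq he0 hek] at hneg
  obtain ⟨b, hb, hb0⟩ := _root_.exists_between hneg
  have hev : ∀ᶠ n in atTop,
      log (e 0) + ∑ k ∈ Ico 1 p, log (e k / e 0) * ((digitCountN z n k : ℝ) / n) < b :=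
    (eventually_sum_lt (fun k hk _ => eventually_log_div_mul_digitCountN_div_lt z he0 (hek k hk))
      (lt_sub_iff_add_lt'.2 hb)).mono fun n hn => by linarith
  refine Summable.of_norm_bounded_eventually_nat
    (summable_geometric_of_lt_one (exp_pos b).le (exp_lt_one_iff.2 hb0)) ?_
  filter_upwards [hev, eventually_ne_atTop 0] with n hn hn0
  rw [pow_mul_prod_pow_eq_exp _ he0 (fun k hk => div_pos (hek k hk) he0) hn0,
    norm_of_nonneg (exp_pos _).le, ← exp_nat_mul]
  exact exp_le_exp.2 (mul_le_mul_of_nonneg_left hn.le n.cast_nonneg)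
end

section
/- Let a : ℕ → (0,∞) be a sequence of positive reals with a(n) → 0. Then there exists a nondecreasing function γ : ℕ → ℕ with γ(n) ≤ n for all n and γ(n) → ∞, such that a(n)/a(γ(n)) → 0 as n → ∞. -/
open Filter Topology

/-- Take `γ n` to be the largest `k ≤ n` beyond whose threshold `N k` the index `n` lies,
where `P k m` holds for all `m ≥ N k`. -/
theorem exists_monotone_le_self_tendsto_atTop_eventually {P : ℕ → ℕ → Prop}
    (hP : ∀ k, ∀ᶠ n in atTop, P k n) :
    ∃ γ : ℕ → ℕ, Monotone γ ∧ (∀ n, γ n ≤ n) ∧ Tendsto γ atTop atTop ∧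
      ∀ᶠ n in atTop, P (γ n) n := by
  classical
  choose N hN using fun k => eventually_atTop.1 (hP k)
  refine ⟨fun n => Nat.findGreatest (fun k => N k ≤ n) n, fun m n hmn =>
    Nat.findGreatest_mono (fun _ hk => hk.trans hmn) hmn, fun n => Nat.findGreatest_le n, ?_, ?_⟩
  · refine tendsto_atTop.2 fun K => eventually_atTop.2 ⟨max K (N K), fun n hn => ?_⟩
    exact Nat.le_findGreatest (le_of_max_le_left hn) (le_of_max_le_right hn)
  · refine eventually_atTop.2 ⟨N 0, fun n hn => hN _ n ?_⟩
    exact Nat.findGreatest_spec (P := fun k => N k ≤ n) (Nat.zero_le n) hn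

/-- For every sequence of positive reals `a(n) → 0`, there is a nondecreasing `γ : ℕ → ℕ`
with `γ(n) ≤ n` and `γ(n) → ∞`, such that `a(n)/a(γ(n)) → 0`. -/
theorem stmt15 (a : ℕ → ℝ) (hpos : ∀ n, 0 < a n) (h0 : Tendsto a atTop (𝓝 0)) :
    ∃ γ : ℕ → ℕ, Monotone γ ∧ (∀ n, γ n ≤ n) ∧ Tendsto γ atTop atTop ∧
      Tendsto (fun n => a n / a (γ n)) atTop (𝓝 0) := by
  have hsmall : ∀ k : ℕ, ∀ᶠ n in atTop, a n * k ≤ a k := fun k => by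
    have h : Tendsto (fun n => a n * k) atTop (𝓝 0) := by simpa using h0.mul_const (k : ℝ)
    exact h.eventually (eventually_le_nhds (hpos k))
  obtain ⟨γ, hmono, hle, htop, hγ⟩ := exists_monotone_le_self_tendsto_atTop_eventually hsmall
  refine ⟨γ, hmono, hle, htop, ?_⟩
  have hinv : Tendsto (fun n => ((γ n : ℕ) : ℝ)⁻¹) atTop (𝓝 0) :=
    tendsto_inv_atTop_zero.comp (tendsto_natCast_atTop_atTop.comp htop)
  refine squeeze_zero' (Eventually.of_forall fun n => (div_pos (hpos n) (hpos _)).le) ?_ hinv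
  filter_upwards [hγ, htop.eventually (eventually_ge_atTop 1)] with n hn hγ1
  have hγpos : (0 : ℝ) < γ n := by exact_mod_cast hγ1
  rw [div_le_iff₀ (hpos _), inv_mul_eq_div, le_div_iff₀ hγpos]
  exact hn
end

section
/- Let p and q be primes (possibly equal) and let ψ_{q,p} : ℤ_p → ℤ_q send ∑ d_n p^n (each d_n ∈ {0,...,p−1}) to ∑ d_n q^n. Then ψ_{q,p} is Hölder continuous with exponent log_p q: |ψ_{q,p}(a) − ψ_{q,p}(b)|_q ≤ |a − b|_p^{log_p q} for all a, b ∈ ℤ_p; moreover this inequality is an equality for all a, b if and only if p ≤ q. -/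
/-- The space-change map `ψ_{q,p} : ℤ_p → ℤ_q`, sending `∑ d_n p^n` to `∑ d_n q^n`.
The `n`-th base-`p` digit of `z` is `z.appr (n+1) / p^n ∈ {0,...,p−1}`. -/
noncomputable def psi (p q : ℕ) [Fact p.Prime] [Fact q.Prime] (z : ℤ_[p]) : ℤ_[q] :=
  ∑' n : ℕ, ((z.appr (n + 1) / p ^ n : ℕ) : ℤ_[q]) * (q : ℤ_[q]) ^ n

/-!
If `‖a - b‖_p = p^{-k}`, then `a` and `b` share their first `k` digits and differ in the `k`-th.
Hence `ψ(a) - ψ(b) = ∑_{n ≥ k} (d_n(a) - d_n(b)) q^n` has norm at most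
`q^{-k} = (p^{-k})^{log_p q}`. When `p ≤ q` the leading coefficient `d_k(a) - d_k(b)` is a
nonzero integer of absolute value `< q`, hence a `q`-adic unit, and the bound is attained.
When `q < p`, the single digit `q` of `ℤ_p` is sent to `q ∈ ℤ_q`, of norm
`q⁻¹ ≠ 1 = ‖q‖_p^{log_p q}`.
-/

theorem Real.zpow_rpow_logb {b x : ℝ} (hb : 0 < b) (hb₁ : b ≠ 1) (hx : 0 < x) (z : ℤ) :
    (b ^ z) ^ Real.logb b x = x ^ z := by
  rw [← Real.rpow_intCast, ← Real.rpow_mul hb.le, mul_comm, Real.rpow_mul hb.le,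
    Real.rpow_logb hb hb₁ hx, Real.rpow_intCast]

namespace PadicInt

variable {p : ℕ} [Fact p.Prime]

theorem appr_eq_of_sub_mem_span {x : ℤ_[p]} {n m : ℕ} (hm : m < p ^ n)
    (hx : x - m ∈ Ideal.span {(p : ℤ_[p]) ^ n}) : x.appr n = m := by
  have h := zmod_congr_of_sub_mem_span n x _ _ (appr_spec n x) hx
  rwa [ZMod.natCast_eq_natCast_iff', Nat.mod_eq_of_lt (appr_lt x n), Nat.mod_eq_of_lt hm] at h

theorem appr_natCast {m n : ℕ} (hm : m < p ^ n) : (m : ℤ_[p]).appr n = m :=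
  appr_eq_of_sub_mem_span hm (by simp)

theorem appr_eq_appr_iff {a b : ℤ_[p]} {n : ℕ} :
    a.appr n = b.appr n ↔ ‖a - b‖ ≤ (p : ℝ) ^ (-n : ℤ) := by
  rw [norm_le_pow_iff_mem_span_pow]
  constructor
  · intro h
    have hab : a - b = (a - a.appr n) - (b - b.appr n) := by rw [h]; ring
    exact hab ▸ sub_mem (appr_spec n a) (appr_spec n b)
  · intro h
    refine appr_eq_of_sub_mem_span (appr_lt b n) ?_
    rw [← sub_add_sub_cancel a b]
    exact add_mem h (appr_spec n b)

noncomputable def digit (z : ℤ_[p]) (n : ℕ) : ℕ := z.appr (n + 1) / p ^ n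

theorem digit_lt (z : ℤ_[p]) (n : ℕ) : z.digit n < p := by
  rw [digit, Nat.div_lt_iff_lt_mul (pow_pos (Fact.out : p.Prime).pos n), ← pow_succ']
  exact z.appr_lt _

theorem appr_succ (z : ℤ_[p]) (n : ℕ) : z.appr (n + 1) = p ^ n * z.digit n + z.appr n := by
  have hmod : z.appr n % p ^ n = z.appr (n + 1) % p ^ n :=
    (Nat.modEq_iff_dvd' (z.appr_mono n.le_succ)).mpr (z.dvd_appr_sub_appr n (n + 1) n.le_succ)
  rw [Nat.mod_eq_of_lt (z.appr_lt n)] at hmod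
  rw [hmod, digit, Nat.div_add_mod]

theorem digit_natCast_of_lt {m : ℕ} (hm : m < p) (n : ℕ) :
    (m : ℤ_[p]).digit n = if n = 0 then m else 0 := by
  have hp : p ≤ p ^ (n + 1) := Nat.le_self_pow n.succ_ne_zero p
  rw [digit, appr_natCast (hm.trans_le hp)]
  rcases n with _ | n
  · simp
  · exact Nat.div_eq_of_lt (hm.trans_le (Nat.le_self_pow n.succ_ne_zero p))

theorem digit_eq_digit_of_norm_sub_le {a b : ℤ_[p]} {k n : ℕ}
    (h : ‖a - b‖ ≤ (p : ℝ) ^ (-k : ℤ)) (hn : n < k) : a.digit n = b.digit n := by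
  have hp : (1 : ℝ) ≤ p := by exact_mod_cast (Fact.out : p.Prime).one_le
  rw [digit, appr_eq_appr_iff.mpr (h.trans (zpow_le_zpow_right₀ hp (by omega)))]
  rfl

theorem digit_ne_digit_of_norm_sub_eq {a b : ℤ_[p]} {k : ℕ}
    (h : ‖a - b‖ = (p : ℝ) ^ (-k : ℤ)) : a.digit k ≠ b.digit k := by
  intro hk
  have hp : (1 : ℝ) < p := by exact_mod_cast (Fact.out : p.Prime).one_lt
  have hsucc : ‖a - b‖ ≤ (p : ℝ) ^ (-(k + 1 : ℕ) : ℤ) := by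
    rw [← appr_eq_appr_iff, appr_succ, appr_succ, hk, appr_eq_appr_iff.mpr h.le]
  rw [h] at hsucc
  have := (zpow_le_zpow_iff_right₀ hp).mp hsucc
  omega

theorem norm_intCast_eq_one_of_natAbs_lt {z : ℤ} (hz : z ≠ 0) (hzp : z.natAbs < p) :
    ‖(z : ℤ_[p])‖ = 1 := by
  refine (norm_le_one _).antisymm (not_lt.mp fun h => ?_)
  have := Int.natAbs_le_of_dvd_ne_zero (norm_intCast_lt_one_iff.mp h) hz
  rw [Int.natAbs_natCast] at this
  omega

theorem norm_mul_pow_le (c : ℤ_[p]) (n : ℕ) : ‖c * (p : ℤ_[p]) ^ n‖ ≤ (p : ℝ) ^ (-n : ℤ) := by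
  rw [norm_mul, norm_p_pow]
  exact mul_le_of_le_one_left (by positivity) (norm_le_one c)

theorem summable_mul_pow (c : ℕ → ℤ_[p]) : Summable fun n => c n * (p : ℤ_[p]) ^ n := by
  have hp : (1 : ℝ) < p := by exact_mod_cast (Fact.out : p.Prime).one_lt
  refine .of_norm_bounded (summable_geometric_of_lt_one (by positivity) (inv_lt_one_of_one_lt₀ hp))
    fun n => ?_
  simpa [zpow_neg, inv_pow] using norm_mul_pow_le (c n) n

theorem norm_tsum_mul_pow_le {c : ℕ → ℤ_[p]} {k : ℕ} (hc : ∀ n < k, c n = 0) :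
    ‖∑' n, c n * (p : ℤ_[p]) ^ n‖ ≤ (p : ℝ) ^ (-k : ℤ) := by
  have hp : (1 : ℝ) ≤ p := by exact_mod_cast (Fact.out : p.Prime).one_le
  refine IsUltrametricDist.norm_tsum_le_of_forall_le_of_nonneg (by positivity) fun n => ?_
  rcases lt_or_ge n k with hn | hn
  · simp [hc n hn]
  · exact (norm_mul_pow_le _ n).trans (zpow_le_zpow_right₀ hp (by omega))

theorem norm_tsum_mul_pow_eq {c : ℕ → ℤ_[p]} {k : ℕ} (hc : ∀ n < k, c n = 0)
    (hk : ‖c k‖ = 1) : ‖∑' n, c n * (p : ℤ_[p]) ^ n‖ = (p : ℝ) ^ (-k : ℤ) := by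
  have hp : (1 : ℝ) < p := by exact_mod_cast (Fact.out : p.Prime).one_lt
  have hhead : ‖c k * (p : ℤ_[p]) ^ k‖ = (p : ℝ) ^ (-k : ℤ) := by
    rw [norm_mul, hk, one_mul, norm_p_pow]
  have htail : ‖∑' n, (if n = k then 0 else c n) * (p : ℤ_[p]) ^ n‖ < (p : ℝ) ^ (-k : ℤ) := by
    refine (norm_tsum_mul_pow_le (k := k + 1) fun n hn => ?_).trans_lt
      (zpow_lt_zpow_right₀ hp (by omega))
    rcases eq_or_ne n k with rfl | hnk
    · exact if_pos rfl
    · rw [if_neg hnk, hc n (by omega)]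
  rw [(summable_mul_pow c).tsum_eq_add_tsum_ite k]
  simp only [ite_mul, zero_mul] at htail
  rw [IsUltrametricDist.norm_add_eq_max_of_norm_ne_norm (by rw [hhead]; exact htail.ne'),
    hhead, max_eq_left htail.le]

end PadicInt

open PadicInt

section psi

variable {p q : ℕ} [Fact p.Prime] [Fact q.Prime]

theorem psi_eq_tsum_digit (z : ℤ_[p]) :
    psi p q z = ∑' n, (z.digit n : ℤ_[q]) * (q : ℤ_[q]) ^ n :=
  rfl

theorem psi_sub_psi (a b : ℤ_[p]) :
    psi p q a - psi p q b =
      ∑' n, (((a.digit n : ℤ) - b.digit n : ℤ) : ℤ_[q]) * (q : ℤ_[q]) ^ n := by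
  rw [psi_eq_tsum_digit, psi_eq_tsum_digit, ← (summable_mul_pow _).tsum_sub (summable_mul_pow _)]
  push_cast [sub_mul]
  rfl

theorem psi_natCast_of_lt {m : ℕ} (hm : m < p) : psi p q m = m := by
  rw [psi_eq_tsum_digit, tsum_eq_single 0 fun n hn => by simp [digit_natCast_of_lt hm, hn]]
  simp [digit_natCast_of_lt hm]

theorem psi_zero : psi p q 0 = 0 := by
  simpa using psi_natCast_of_lt (q := q) (Fact.out : p.Prime).pos

theorem norm_psi_sub_le_of_norm_sub_le {a b : ℤ_[p]} {k : ℕ}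
    (h : ‖a - b‖ ≤ (p : ℝ) ^ (-k : ℤ)) : ‖psi p q a - psi p q b‖ ≤ (q : ℝ) ^ (-k : ℤ) := by
  rw [psi_sub_psi]
  exact norm_tsum_mul_pow_le fun n hn => by simp [digit_eq_digit_of_norm_sub_le h hn]

theorem norm_psi_sub_eq_of_norm_sub_eq (hpq : p ≤ q) {a b : ℤ_[p]} {k : ℕ}
    (h : ‖a - b‖ = (p : ℝ) ^ (-k : ℤ)) : ‖psi p q a - psi p q b‖ = (q : ℝ) ^ (-k : ℤ) := by
  rw [psi_sub_psi]
  refine norm_tsum_mul_pow_eq (fun n hn => by simp [digit_eq_digit_of_norm_sub_le h.le hn]) ?_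
  have hk := digit_ne_digit_of_norm_sub_eq h
  refine norm_intCast_eq_one_of_natAbs_lt (by omega) ?_
  have := a.digit_lt k
  have := b.digit_lt k
  omega

theorem norm_sub_rpow_logb {a b : ℤ_[p]} {k : ℕ} (h : ‖a - b‖ = (p : ℝ) ^ (-k : ℤ)) :
    ‖a - b‖ ^ Real.logb p q = (q : ℝ) ^ (-k : ℤ) := by
  have hp := (Fact.out : p.Prime)
  rw [h, Real.zpow_rpow_logb (by exact_mod_cast hp.pos) (by exact_mod_cast hp.ne_one)
    (by exact_mod_cast (Fact.out : q.Prime).pos)]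

theorem norm_psi_sub_le_rpow (a b : ℤ_[p]) :
    ‖psi p q a - psi p q b‖ ≤ ‖a - b‖ ^ Real.logb p q := by
  rcases eq_or_ne a b with rfl | hab
  · simpa using Real.rpow_nonneg le_rfl _
  have h := norm_eq_zpow_neg_valuation (sub_ne_zero.mpr hab)
  rw [norm_sub_rpow_logb h]
  exact norm_psi_sub_le_of_norm_sub_le h.le

theorem norm_psi_sub_eq_rpow (hpq : p ≤ q) (a b : ℤ_[p]) :
    ‖psi p q a - psi p q b‖ = ‖a - b‖ ^ Real.logb p q := by
  rcases eq_or_ne a b with rfl | hab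
  · have hlogb : 0 < Real.logb p q :=
      Real.logb_pos (by exact_mod_cast (Fact.out : p.Prime).one_lt)
        (by exact_mod_cast (Fact.out : q.Prime).one_lt)
    simp [Real.zero_rpow hlogb.ne']
  have h := norm_eq_zpow_neg_valuation (sub_ne_zero.mpr hab)
  rw [norm_sub_rpow_logb h]
  exact norm_psi_sub_eq_of_norm_sub_eq hpq h

theorem norm_psi_natCast_sub_psi_zero_ne (hqp : q < p) :
    ‖psi p q q - psi p q 0‖ ≠ ‖(q : ℤ_[p]) - 0‖ ^ Real.logb p q := by
  have hcop : p.Coprime q := (Nat.coprime_primes Fact.out Fact.out).mpr hqp.ne'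
  rw [psi_natCast_of_lt hqp, psi_zero, sub_zero, sub_zero, norm_p,
    norm_natCast_eq_one_iff.mpr hcop, Real.one_rpow]
  exact inv_ne_one.mpr (by exact_mod_cast (Fact.out : q.Prime).ne_one)

end psi

/-- `ψ_{q,p}` is Hölder continuous with exponent `log_p q`:
`|ψ_{q,p}(a) − ψ_{q,p}(b)|_q ≤ |a − b|_p^{log_p q}` for all `a, b ∈ ℤ_p`, and this
inequality is an equality for all `a, b` if and only if `p ≤ q`. -/
theorem stmt16 (p q : ℕ) [Fact p.Prime] [Fact q.Prime] :
    (∀ a b : ℤ_[p], ‖psi p q a - psi p q b‖ ≤ ‖a - b‖ ^ (Real.log q / Real.log p)) ∧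
    ((∀ a b : ℤ_[p], ‖psi p q a - psi p q b‖ = ‖a - b‖ ^ (Real.log q / Real.log p)) ↔
      p ≤ q) := by
  simp only [Real.log_div_log]
  refine ⟨norm_psi_sub_le_rpow, fun h => ?_, norm_psi_sub_eq_rpow⟩
  by_contra! hqp
  exact norm_psi_natCast_sub_psi_zero_ne hqp (h q 0)
end

section
/- Fix p ≥ 2, an integral domain R of characteristic coprime to p with units r_0,...,r_{p−1}, and define the sorting operator L on the R-module of locally constant functions ℤ_p → R by L{φ}(z) = (1/p)∑_{k=0}^{p−1} r_k φ(pz + k). Then for all m, n ≥ 0 and k ∈ {0,...,p^n − 1}: if m < n, L^m applied to the indicator of {z ≡ k mod p^n} equals (r_0^m κ([k]_{p^m})/p^m) times the indicator of {z ≡ θ_p^{∘m}(k) mod p^{n−m}}; and if m ≥ n, it equals the constant (r_0^n κ(k)/p^n)·((1/p)∑_{j=0}^{p−1} r_j)^{m−n}. -/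
/-- The digit stream of `p·z + j`. -/
def consDigit {p : ℕ} (j : Fin p) (z : ℕ → Fin p) : ℕ → Fin p
  | 0 => j
  | i + 1 => z i

/-- The sorting operator `L{φ}(z) = (1/p)∑_{k<p} r_k φ(pz+k)` on functions `ℤ_p → K`. -/
def sortOp {p : ℕ} {K : Type*} [Field K] (r : Fin p → K)
    (φ : (ℕ → Fin p) → K) : (ℕ → Fin p) → K :=
  fun z => (p : K)⁻¹ * ∑ j : Fin p, r j * φ (consDigit j z)

/-- `κ(m) = ∏_{j=1}^{p−1}(r_j/r_0)^{#_{p:j}(m)}` for a natural number `m`. -/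
def kappaN {p : ℕ} [NeZero p] {K : Type*} [Field K] (r : Fin p → K) (m : ℕ) : K :=
  ∏ j ∈ Finset.univ.filter (fun j : Fin p => j ≠ 0),
    (r j / r 0) ^ ((Nat.digits p m).count (j : ℕ))

/-!
Applying `L` to the indicator of `z ≡ k mod p^(n+1)` only the summand with `j` the lowest digit
`k₀` of `k` survives, since `p z + j ≡ k mod p^(n+1)` iff `j = k₀` and `z ≡ ⌊k/p⌋ mod p^n`; so one
step yields `(r_{k₀}/p)·[z ≡ ⌊k/p⌋ mod p^n]`, and `m ≤ n` steps strip the `m` lowest digits.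
After `n` steps the indicator has become the constant `1`, which `L` multiplies by
`(1/p)∑ r_j`. Finally `r₀^m κ([k]_{p^m}) = ∏_{i<m} r_{k_i}`: `κ` accounts for the nonzero digits,
and `r₀^m` for the zero digits, including the leading zeros that `Nat.digits` omits.
-/

def digit (p : ℕ) [NeZero p] (k i : ℕ) : Fin p :=
  Fin.ofNat p (k / p ^ i)

section Digits

variable {p : ℕ}

lemma digit_div [NeZero p] (k i : ℕ) : digit p (k / p) i = digit p k (i + 1) := by
  simp [digit, Nat.div_div_eq_div_mul, pow_succ']

lemma trunc_consDigit (j : Fin p) (z : ℕ → Fin p) (n : ℕ) :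
    trunc (consDigit j z) (n + 1) = j + p * trunc z n := by
  simp only [trunc, Finset.sum_range_succ', consDigit, Finset.mul_sum, pow_succ]
  simp only [pow_zero, mul_one]
  rw [add_comm]
  exact congrArg _ (Finset.sum_congr rfl fun i _ => by ring)

lemma trunc_consDigit_eq_iff [NeZero p] (j : Fin p) (z : ℕ → Fin p) (n k : ℕ) :
    trunc (consDigit j z) (n + 1) = k ↔ j = digit p k 0 ∧ trunc z n = k / p := by
  have hdivmod := Nat.div_mod_unique (NeZero.pos p) (a := k) (d := trunc z n) (c := j)
  rw [and_iff_left j.isLt] at hdivmod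
  rw [trunc_consDigit, ← hdivmod, Fin.ext_iff]
  simp [digit, and_comm, eq_comm]

end Digits

section Kappa

variable {p : ℕ} [NeZero p] {K : Type*} [Field K] (r : Fin p → K)

lemma kappaN_zero : kappaN r 0 = 1 := by
  simp [kappaN]

lemma kappaN_eq_mul_kappaN_div (hp : 2 ≤ p) (h0 : r 0 ≠ 0) (N : ℕ) :
    kappaN r N = r (digit p N 0) / r 0 * kappaN r (N / p) := by
  rcases N.eq_zero_or_pos with rfl | hN
  · simp [kappaN_zero, digit, h0]
  have hlow : ∀ j : Fin p, ((N % p == (j : ℕ)) = true) ↔ digit p N 0 = j := by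
    intro j
    simp [digit, Fin.ext_iff]
  unfold kappaN
  rw [Nat.digits_def' hp hN]
  simp only [List.count_cons, pow_add, Finset.prod_mul_distrib, hlow]
  rw [Finset.prod_pow_boole, mul_comm]
  congr 1
  split_ifs with hd
  · rfl
  · simp only [Finset.mem_filter, Finset.mem_univ, true_and, not_not] at hd
    rw [hd, div_self h0]

lemma r_zero_pow_mul_kappaN_mod (hp : 2 ≤ p) (h0 : r 0 ≠ 0) (m k : ℕ) :
    r 0 ^ m * kappaN r (k % p ^ m) = ∏ i ∈ Finset.range m, r (digit p k i) := by
  induction m generalizing k with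
  | zero => simp [Nat.mod_one, kappaN_zero]
  | succ m ih =>
    have hdigit : digit p (k % p ^ (m + 1)) 0 = digit p k 0 := by
      simp only [digit, pow_zero, Nat.div_one, Fin.ext_iff, Fin.val_ofNat]
      exact Nat.mod_mod_of_dvd _ (dvd_pow_self p m.succ_ne_zero)
    have hdiv : k % p ^ (m + 1) / p = k / p % p ^ m := by
      rw [pow_succ']
      exact Nat.mod_mul_right_div_self k p (p ^ m)
    simp only [Finset.prod_range_succ', ← digit_div, ← ih]
    rw [kappaN_eq_mul_kappaN_div r hp h0, hdigit, hdiv]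
    field_simp
    ring

end Kappa

section SortOp

variable {p : ℕ} {K : Type*} [Field K] (r : Fin p → K)

lemma sortOp_const_mul (c : K) (φ : (ℕ → Fin p) → K) :
    sortOp r (fun z => c * φ z) = fun z => c * sortOp r φ z := by
  funext z
  simp only [sortOp, mul_left_comm _ c, ← Finset.mul_sum]

lemma iterate_sortOp_const_mul (c : K) (φ : (ℕ → Fin p) → K) (m : ℕ) :
    (sortOp r)^[m] (fun z => c * φ z) = fun z => c * (sortOp r)^[m] φ z :=
  (Function.Commute.iterate_left (fun φ => sortOp_const_mul r c φ) m) φ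

lemma sortOp_const (c : K) :
    sortOp r (fun _ => c) = fun _ => ((p : K)⁻¹ * ∑ j, r j) * c := by
  funext z
  simp only [sortOp, ← Finset.sum_mul, mul_assoc]

lemma iterate_sortOp_const (c : K) (t : ℕ) :
    (sortOp r)^[t] (fun _ => c) = fun _ => ((p : K)⁻¹ * ∑ j, r j) ^ t * c := by
  have h : Function.Semiconj (fun c : K => fun _ : ℕ → Fin p => c)
      (((p : K)⁻¹ * ∑ j, r j) * ·) (sortOp r) := fun c => (sortOp_const r c).symm
  rw [← (h.iterate_right t) c, mul_left_iterate]

lemma sortOp_indicator [NeZero p] (n k : ℕ) :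
    sortOp r (fun z => if trunc z (n + 1) = k then (1 : K) else 0)
      = fun z => (p : K)⁻¹ * r (digit p k 0) * (if trunc z n = k / p then 1 else 0) := by
  funext z
  simp only [sortOp, trunc_consDigit_eq_iff, mul_assoc]
  by_cases h : trunc z n = k / p <;> simp [h]

lemma iterate_sortOp_indicator [NeZero p] {m n : ℕ} (hm : m ≤ n) (k : ℕ) :
    (sortOp r)^[m] (fun z => if trunc z n = k then (1 : K) else 0)
      = fun z => (∏ i ∈ Finset.range m, r (digit p k i)) / (p : K) ^ m *
          (if trunc z (n - m) = k / p ^ m then 1 else 0) := by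
  induction m generalizing n k with
  | zero => simp
  | succ m ih =>
    obtain ⟨n, rfl⟩ : ∃ n', n = n' + 1 := ⟨n - 1, by omega⟩
    rw [Function.iterate_succ_apply, sortOp_indicator, iterate_sortOp_const_mul,
      ih (by omega), Nat.div_div_eq_div_mul, ← pow_succ', Nat.add_sub_add_right]
    funext z
    simp only [Finset.prod_range_succ', ← digit_div, pow_succ]
    field_simp

end SortOp

theorem stmt18_general {p : ℕ} [NeZero p] (hp : 2 ≤ p) {K : Type*} [Field K]
    (r : Fin p → K) (hr : ∀ j, r j ≠ 0)
    (m n k : ℕ) (hk : k < p ^ n) :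
    (m < n →
      (sortOp r)^[m] (fun z => if trunc z n = k then (1 : K) else 0)
        = fun z => r 0 ^ m * kappaN r (k % p ^ m) / (p : K) ^ m
            * (if trunc z (n - m) = k / p ^ m then (1 : K) else 0)) ∧
    (n ≤ m →
      (sortOp r)^[m] (fun z => if trunc z n = k then (1 : K) else 0)
        = fun _ => r 0 ^ n * kappaN r k / (p : K) ^ n
            * ((p : K)⁻¹ * ∑ j : Fin p, r j) ^ (m - n)) := by
  refine ⟨fun hmn => ?_, fun hnm => ?_⟩
  · rw [iterate_sortOp_indicator r hmn.le, r_zero_pow_mul_kappaN_mod r hp (hr 0)]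
  · have hconst : (sortOp r)^[n] (fun z => if trunc z n = k then (1 : K) else 0)
        = fun _ => r 0 ^ n * kappaN r k / (p : K) ^ n := by
      rw [iterate_sortOp_indicator r le_rfl, ← Nat.mod_eq_of_lt hk,
        r_zero_pow_mul_kappaN_mod r hp (hr 0), Nat.mod_eq_of_lt hk, Nat.div_eq_of_lt hk]
      simp [trunc]
    rw [← Nat.sub_add_cancel hnm, Function.iterate_add_apply, hconst, iterate_sortOp_const,
      Nat.add_sub_cancel]
    exact funext fun _ => mul_comm _ _

/-- Action of the iterates of the sorting operator on indicators of congruence classes: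
for `k < p^n`, if `m < n` then `L^m[z ≡ k mod p^n] = (r_0^m κ([k]_{p^m})/p^m)·[z ≡ θ_p^{∘m}(k)
mod p^{n−m}]`, while for `m ≥ n` it is the constant `(r_0^n κ(k)/p^n)·((1/p)∑_j r_j)^{m−n}`. -/
theorem stmt18 {p : ℕ} [NeZero p] (hp : 2 ≤ p) {K : Type*} [Field K]
    (hpK : (p : K) ≠ 0) (r : Fin p → K) (hr : ∀ j, r j ≠ 0)
    (m n k : ℕ) (hk : k < p ^ n) :
    (m < n →
      (sortOp r)^[m] (fun z => if trunc z n = k then (1 : K) else 0)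
        = fun z => r 0 ^ m * kappaN r (k % p ^ m) / (p : K) ^ m
            * (if trunc z (n - m) = k / p ^ m then (1 : K) else 0)) ∧
    (n ≤ m →
      (sortOp r)^[m] (fun z => if trunc z n = k then (1 : K) else 0)
        = fun _ => r 0 ^ n * kappaN r k / (p : K) ^ n
            * ((p : K)⁻¹ * ∑ j : Fin p, r j) ^ (m - n)) :=
  stmt18_general hp r hr m n k hk
end
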